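/- Let K be a locally presentable category, (C, C^□) a cofibrant weak factorization system generated by a set I ⊆ C, (Cyl, γ, σ) a cartesian cylinder for (C, C^□), and S ⊆ C a subset. Suppose X and Y are fibrant objects. Then a map f: X → Y lies in W(Cyl,S,I) if and only if there exists g: Y → X with g ∘ f homotopic to id_X and f ∘ g homotopic to id_Y. -/

import Mathlib

/-!
Common definitions: weak factorization systems, functorial cylinders,
Cisinski's construction, localizers, locally presentable categories.
-/

universe w v u u₁ u₂ u₃

open CategoryTheory Limits Opposite

namespace Paper

variable {K : Type u} [Category.{v} K]

/-- The class of maps with the right lifting property against all maps in `H`. -/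
def Rlp (H : MorphismProperty K) : MorphismProperty K :=
  fun _ _ g => ∀ ⦃A B : K⦄ (h : A ⟶ B), H h → HasLiftingProperty h g

/-- The class of maps with the left lifting property against all maps in `H`. -/
def Llp (H : MorphismProperty K) : MorphismProperty K :=
  fun _ _ f => ∀ ⦃A B : K⦄ (h : A ⟶ B), H h → HasLiftingProperty f h

/-- Weak factorization system. -/
structure IsWFS (L R : MorphismProperty K) : Prop where
  llp_eq : L = Llp R
  rlp_eq : R = Rlp L
  factor : ∀ ⦃X Y : K⦄ (f : X ⟶ Y),
    ∃ (Z : K) (l : X ⟶ Z) (r : Z ⟶ Y), L l ∧ R r ∧ l ≫ r = f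

/-- A class of maps is essentially a (small) set. -/
def IsSmallClass (I : MorphismProperty K) : Prop :=
  Small.{v} (Σ (X : K) (Y : K), { f : X ⟶ Y // I f })

/-- Every object is cofibrant. -/
def AllCofibrant [HasInitial K] (L : MorphismProperty K) : Prop :=
  ∀ X : K, L (initial.to X)

/-- `L` is cofibrantly generated (by a set). -/
def CofGenerated (L : MorphismProperty K) : Prop :=
  ∃ I : MorphismProperty K, IsSmallClass I ∧ L = Llp (Rlp I)

/-- intersection of two classes of maps -/
def interClass (A B : MorphismProperty K) : MorphismProperty K := fun _ _ f => A f ∧ B f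

/-- closed under retracts in the arrow category -/
def RetractClosed (W : MorphismProperty K) : Prop :=
  ∀ ⦃f g : Arrow K⦄ (i : f ⟶ g) (r : g ⟶ f), i ≫ r = 𝟙 f → W g.hom → W f.hom

/-- the 2-out-of-3 property -/
def TwoOutOfThree (W : MorphismProperty K) : Prop :=
  (∀ ⦃X Y Z : K⦄ (f : X ⟶ Y) (g : Y ⟶ Z), W f → W g → W (f ≫ g)) ∧
  (∀ ⦃X Y Z : K⦄ (f : X ⟶ Y) (g : Y ⟶ Z), W f → W (f ≫ g) → W g) ∧
  (∀ ⦃X Y Z : K⦄ (f : X ⟶ Y) (g : Y ⟶ Z), W g → W (f ≫ g) → W f)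

/-- Quillen model structure, given by cofibrations, weak equivalences and fibrations. -/
structure IsModelStructure (Cof W Fib : MorphismProperty K) : Prop where
  retractClosed : RetractClosed W
  twoOutOfThree : TwoOutOfThree W
  wfs₁ : IsWFS Cof (interClass W Fib)
  wfs₂ : IsWFS (interClass Cof W) Fib

/-- the functor `X ↦ X + X` -/
@[simps] noncomputable def double (K : Type u) [Category.{v} K] [HasBinaryCoproducts K] :
    K ⥤ K where
  obj X := X ⨿ X
  map f := coprod.map f f

/-- A functorial cylinder: a functor `C` together with natural transformations
`γ : X + X ⟶ C X` and `σ : C X ⟶ X` factoring the codiagonal. -/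
structure Cylinder (K : Type u) [Category.{v} K] [HasBinaryCoproducts K] where
  C : K ⥤ K
  γ : double K ⟶ C
  σ : C ⟶ 𝟭 K
  fac : ∀ X : K, γ.app X ≫ σ.app X = coprod.desc (𝟙 X) (𝟙 X)

namespace Cylinder
variable [HasBinaryCoproducts K] (cyl : Cylinder K)

/-- `γ⁰` -/
noncomputable def γ₀ : 𝟭 K ⟶ cyl.C where
  app X := coprod.inl ≫ cyl.γ.app X
  naturality X Y f := by
    have h := cyl.γ.naturality f
    dsimp [double] at h ⊢
    rw [Category.assoc, ← h, ← Category.assoc, ← Category.assoc, coprod.inl_map]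

/-- `γ¹` -/
noncomputable def γ₁ : 𝟭 K ⟶ cyl.C where
  app X := coprod.inr ≫ cyl.γ.app X
  naturality X Y f := by
    have h := cyl.γ.naturality f
    dsimp [double] at h ⊢
    rw [Category.assoc, ← h, ← Category.assoc, ← Category.assoc, coprod.inr_map]

/-- `(Cyl, γ, σ)` is a cylinder for a weak factorization system whose left class is `L`
if each `γ_X` lies in `L`. -/
def IsCylinderFor (L : MorphismProperty K) : Prop := ∀ X : K, L (cyl.γ.app X)

/-- the cylinder is final if each `σ_X` lies in `R`. -/
def IsFinal (R : MorphismProperty K) : Prop := ∀ X : K, R (cyl.σ.app X)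

end Cylinder

section Star
variable [HasPushouts K] {F F' : K ⥤ K}

/-- `f ⋆ α`: the induced map from the pushout of `F f` along `α_X` to `F' Y`. -/
noncomputable def starMap (α : F ⟶ F') {X Y : K} (f : X ⟶ Y) :
    pushout (F.map f) (α.app X) ⟶ F'.obj Y :=
  pushout.desc (α.app Y) (F'.map f) (α.naturality f)

/-- the class `L` is stable under `(−) ⋆ α`. -/
def StableUnderStar (L : MorphismProperty K) (α : F ⟶ F') : Prop :=
  ∀ ⦃X Y : K⦄ (f : X ⟶ Y), L f → L (starMap α f)

/-- the class `I ⋆ α = { f ⋆ α | f ∈ I }`. -/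
def starClass (α : F ⟶ F') (I : MorphismProperty K) : MorphismProperty K :=
  fun _ _ g => ∃ (X Y : K) (f : X ⟶ Y), I f ∧ Arrow.mk g = Arrow.mk (starMap α f)

end Star

/-- the cylinder is cartesian with respect to the left class `L`:
the cylinder functor is a left adjoint and `L` is stable under `⋆γ`, `⋆γ⁰` and `⋆γ¹`. -/
structure Cylinder.IsCartesian [HasBinaryCoproducts K] [HasPushouts K]
    (cyl : Cylinder K) (L : MorphismProperty K) : Prop where
  leftAdjoint : cyl.C.IsLeftAdjoint
  star_γ : StableUnderStar L cyl.γ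
  star_γ₀ : StableUnderStar L cyl.γ₀
  star_γ₁ : StableUnderStar L cyl.γ₁

section Lambda
variable [HasBinaryCoproducts K] [HasPushouts K]

/-- `Λⁿ(Cyl,S,I)` -/
noncomputable def LambdaN (cyl : Cylinder K) (S I : MorphismProperty K) :
    ℕ → MorphismProperty K
  | 0 => fun _ _ f => S f ∨ starClass cyl.γ₀ I f ∨ starClass cyl.γ₁ I f
  | n + 1 => starClass cyl.γ (LambdaN cyl S I n)

/-- `Λ(Cyl,S,I)` -/
noncomputable def Lambda (cyl : Cylinder K) (S I : MorphismProperty K) :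
    MorphismProperty K :=
  fun _ _ f => ∃ n : ℕ, LambdaN cyl S I n f

/-- `T` is fibrant if `T → 1` has the right lifting property against `Λ(Cyl,S,I)`. -/
noncomputable def Fibrant [HasTerminal K] (cyl : Cylinder K) (S I : MorphismProperty K)
    (T : K) : Prop :=
  Rlp (Lambda cyl S I) (terminal.from T)

end Lambda

/-- `f` and `g` are homotopic: `(f|g)` factors through `γ_X`. -/
def Htp [HasBinaryCoproducts K] (cyl : Cylinder K) {X Y : K} (f g : X ⟶ Y) : Prop :=
  ∃ h : cyl.C.obj X ⟶ Y, cyl.γ.app X ≫ h = coprod.desc f g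

/-- symmetric-transitive closure of a relation -/
inductive STClos {α : Sort*} (r : α → α → Prop) : α → α → Prop
  | base : ∀ {x y : α}, r x y → STClos r x y
  | symm : ∀ {x y : α}, STClos r x y → STClos r y x
  | trans : ∀ {x y z : α}, STClos r x y → STClos r y z → STClos r x z

/-- the homotopy equivalence relation `∼`, the symmetric-transitive closure of `≃`. -/
def HtpEq [HasBinaryCoproducts K] (cyl : Cylinder K) {X Y : K} : (X ⟶ Y) → (X ⟶ Y) → Prop :=
  STClos (Htp cyl)

/-- `W(Cyl,S,I)`: the maps `f : X ⟶ Y` such that for every fibrant `T` the induced map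
`Hom(Y,T)/∼ → Hom(X,T)/∼` is bijective (expressed elementwise). -/
noncomputable def Weq [HasBinaryCoproducts K] [HasPushouts K] [HasTerminal K]
    (cyl : Cylinder K) (S I : MorphismProperty K) : MorphismProperty K :=
  fun X Y f => ∀ T : K, Fibrant cyl S I T →
    (∀ t : X ⟶ T, ∃ u : Y ⟶ T, HtpEq cyl (f ≫ u) t) ∧
    (∀ u v : Y ⟶ T, HtpEq cyl (f ≫ u) (f ≫ v) → HtpEq cyl u v)

/-- pushout stability of a class of maps -/
def StableUnderPushout (L : MorphismProperty K) : Prop :=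
  ∀ ⦃A B A' B' : K⦄ ⦃f : A ⟶ B⦄ ⦃g : A ⟶ A'⦄ ⦃f' : A' ⟶ B'⦄ ⦃g' : B ⟶ B'⦄,
    IsPushout g f f' g' → L f → L f'

/-- closure under transfinite composition of smooth (colimit preserving) chains -/
def ClosedUnderTransfiniteComposition (L : MorphismProperty K) : Prop :=
  ∀ (o : Ordinal.{v}) (ho : (0 : Ordinal.{v}) < o)
    (D : (Set.Iio o : Set Ordinal.{v}) ⥤ K),
    Nonempty (PreservesColimits D) →
    (∀ (β : Ordinal.{v}) (hβ : β + 1 < o),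
      L (D.map (homOfLE (Subtype.mk_le_mk.mpr ((le_self_add : β ≤ β + 1))) :
        (⟨β, lt_of_le_of_lt ((le_self_add : β ≤ β + 1)) hβ⟩ : (Set.Iio o : Set Ordinal.{v})) ⟶
        ⟨β + 1, hβ⟩))) →
    ∀ (c : Cocone D), IsColimit c → L (c.ι.app ⟨0, ho⟩)

/-- A localizer for the class `Cof`: a class `W` with the 2-out-of-3 property, containing
`Cof^□`, and whose intersection with `Cof` is closed under pushouts and transfinite
compositions. -/
structure IsLocalizer (Cof W : MorphismProperty K) : Prop where
  twoOutOfThree : TwoOutOfThree W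
  rlp_le : ∀ ⦃X Y : K⦄ (f : X ⟶ Y), Rlp Cof f → W f
  pushout : StableUnderPushout (interClass Cof W)
  transfinite : ClosedUnderTransfiniteComposition (interClass Cof W)

/-- `W(S)`: the smallest localizer for `Cof` containing `S` (the intersection of all of them). -/
def smallestLocalizer (Cof S : MorphismProperty K) : MorphismProperty K :=
  fun _ _ f => ∀ W : MorphismProperty K, IsLocalizer Cof W →
    (∀ ⦃A B : K⦄ (s : A ⟶ B), S s → W s) → W f

/-- the smallest class containing `S` which is a localizer for `Cof` and moreover closed
under retracts in the arrow category. -/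
def smallestRetractLocalizer (Cof S : MorphismProperty K) : MorphismProperty K :=
  fun _ _ f => ∀ W : MorphismProperty K, IsLocalizer Cof W → RetractClosed W →
    (∀ ⦃A B : K⦄ (s : A ⟶ B), S s → W s) → W f

/-- the empty class of maps -/
def emptyClass (K : Type u) [Category.{v} K] : MorphismProperty K := fun _ _ _ => False

/-- a preorder is `κ`-directed if every subset of cardinality `< κ` has an upper bound -/
def IsCardinalDirected (κ : Cardinal.{v}) (J : Type v) [Preorder J] : Prop :=
  ∀ S : Set J, Cardinal.mk S < κ → ∃ j : J, ∀ s ∈ S, s ≤ j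

/-- an object `X` is `κ`-presentable if `Hom(X,-)` preserves `κ`-directed colimits -/
def IsPresentableObj (κ : Cardinal.{v}) (X : K) : Prop :=
  ∀ (J : Type v) [Preorder J], IsCardinalDirected κ J →
    Nonempty (PreservesColimitsOfShape J (coyoneda.obj (op X)))

/-- `X` is a `κ`-directed colimit of objects from the set `A` -/
def IsDirectedColimitFrom (κ : Cardinal.{v}) (A : Set K) (X : K) : Prop :=
  ∃ (J : Type v) (pre : Preorder J),
    letI := pre
    IsCardinalDirected κ J ∧
      ∃ (D : J ⥤ K) (c : Cocone D), Nonempty (IsColimit c) ∧ c.pt = X ∧ ∀ j : J, D.obj j ∈ A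

/-- `κ`-accessible category -/
structure IsCardinalAccessible (κ : Cardinal.{v}) (K : Type u) [Category.{v} K] : Prop where
  isRegular : κ.IsRegular
  hasDirectedColimits :
    ∀ (J : Type v) [Preorder J], IsCardinalDirected κ J → HasColimitsOfShape J K
  generators : ∃ A : Set K, Small.{v} A ∧ (∀ X ∈ A, IsPresentableObj κ X) ∧
    ∀ X : K, IsDirectedColimitFrom κ A X

/-- accessible category -/
def IsAccessibleCat (K : Type u) [Category.{v} K] : Prop :=
  ∃ κ : Cardinal.{v}, IsCardinalAccessible κ K

/-- locally presentable category: accessible and cocomplete -/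
def IsLocallyPresentable (K : Type u) [Category.{v} K] : Prop :=
  IsAccessibleCat K ∧ HasColimits K

/-- `F` preserves `κ`-directed colimits -/
def PreservesCardinalDirectedColimits (κ : Cardinal.{v}) {A : Type u₁} [Category.{v} A]
    {C : Type u₂} [Category.{v} C] (F : A ⥤ C) : Prop :=
  ∀ (J : Type v) [Preorder J], IsCardinalDirected κ J →
    Nonempty (PreservesColimitsOfShape J F)

/-- accessible functor -/
def IsAccessibleFunctor {A : Type u₁} [Category.{v} A] {C : Type u₂} [Category.{v} C]
    (F : A ⥤ C) : Prop :=
  ∃ κ : Cardinal.{v}, IsCardinalAccessible κ A ∧ IsCardinalAccessible κ C ∧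
    PreservesCardinalDirectedColimits κ F

/-- dual strong deformation retract -/
def DualStrongDeformationRetract [HasBinaryCoproducts K] (cyl : Cylinder K)
    {X Y : K} (f : X ⟶ Y) : Prop :=
  ∃ (g : Y ⟶ X) (h : cyl.C.obj X ⟶ X),
    g ≫ f = 𝟙 Y ∧ cyl.γ₀.app X ≫ h = 𝟙 X ∧ cyl.γ₁.app X ≫ h = f ≫ g ∧
      h ≫ f = cyl.σ.app X ≫ f

/-!
For a fibrant `T`, homotopy of maps `A ⟶ T` is already an equivalence relation. Writing `P T`
for the right adjoint of the cylinder applied to `T` (a path object), lifting `i` against the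
endpoint evaluation `P T ⟶ T` is adjoint to lifting `i ⋆ γ⁰ ∈ Λ⁰` against `T ⟶ 1`; hence
evaluation at `0` lies in `I^□`, so every `γ_A` lifts against it. Given homotopies `a ≃ b` and
`a ≃ c`, such a lift produces a homotopy `c ≃ b`, which with reflexivity gives symmetry and
transitivity. Consequently, when `X` and `Y` are fibrant, the bijections defining `W(Cyl,S,I)`,
applied with `T = X` and `T = Y`, yield a homotopy inverse; the converse only needs that
homotopy is compatible with composition.
-/

section Homotopy

variable [HasBinaryCoproducts K]

lemma Cylinder.γ₀_app_σ_app (cyl : Cylinder K) (A : K) : cyl.γ₀.app A ≫ cyl.σ.app A = 𝟙 A :=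
  (Category.assoc _ _ _).trans ((coprod.inl ≫= cyl.fac A).trans (coprod.inl_desc _ _))

lemma Cylinder.γ₁_app_σ_app (cyl : Cylinder K) (A : K) : cyl.γ₁.app A ≫ cyl.σ.app A = 𝟙 A :=
  (Category.assoc _ _ _).trans ((coprod.inr ≫= cyl.fac A).trans (coprod.inr_desc _ _))

variable {cyl : Cylinder K}

lemma htp_iff {A T : K} {a b : A ⟶ T} :
    Htp cyl a b ↔ ∃ H : cyl.C.obj A ⟶ T, cyl.γ₀.app A ≫ H = a ∧ cyl.γ₁.app A ≫ H = b := by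
  refine exists_congr fun H => ⟨fun h => ⟨?_, ?_⟩, fun ⟨h₀, h₁⟩ => coprod.hom_ext ?_ ?_⟩
  · exact (Category.assoc _ _ _).trans ((coprod.inl ≫= h).trans (coprod.inl_desc a b))
  · exact (Category.assoc _ _ _).trans ((coprod.inr ≫= h).trans (coprod.inr_desc a b))
  · exact (Category.assoc _ _ _).symm.trans (h₀.trans (coprod.inl_desc a b).symm)
  · exact (Category.assoc _ _ _).symm.trans (h₁.trans (coprod.inr_desc a b).symm)

lemma Htp.refl {A T : K} (a : A ⟶ T) : Htp cyl a a :=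
  htp_iff.2 ⟨cyl.σ.app A ≫ a, by simp [reassoc_of% cyl.γ₀_app_σ_app A],
    by simp [reassoc_of% cyl.γ₁_app_σ_app A]⟩

lemma Htp.comp_right {A T T' : K} {a b : A ⟶ T} (h : Htp cyl a b) (u : T ⟶ T') :
    Htp cyl (a ≫ u) (b ≫ u) := by
  obtain ⟨H, h₀, h₁⟩ := htp_iff.1 h
  exact htp_iff.2 ⟨H ≫ u, by rw [← h₀, Category.assoc], by rw [← h₁, Category.assoc]⟩

lemma Htp.comp_left {Z A T : K} {a b : A ⟶ T} (h : Htp cyl a b) (w : Z ⟶ A) :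
    Htp cyl (w ≫ a) (w ≫ b) := by
  obtain ⟨H, h₀, h₁⟩ := htp_iff.1 h
  refine htp_iff.2 ⟨cyl.C.map w ≫ H, ?_, ?_⟩
  · rw [← cyl.γ₀.naturality_assoc, h₀, Functor.id_map]
  · rw [← cyl.γ₁.naturality_assoc, h₁, Functor.id_map]

lemma HtpEq.comp_right {A T T' : K} {a b : A ⟶ T} (h : HtpEq cyl a b) (u : T ⟶ T') :
    HtpEq cyl (a ≫ u) (b ≫ u) := by
  induction h with
  | base h => exact .base (h.comp_right u)
  | symm _ ih => exact .symm ih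
  | trans _ _ ih₁ ih₂ => exact .trans ih₁ ih₂

lemma HtpEq.comp_left {Z A T : K} {a b : A ⟶ T} (h : HtpEq cyl a b) (w : Z ⟶ A) :
    HtpEq cyl (w ≫ a) (w ≫ b) := by
  induction h with
  | base h => exact .base (h.comp_left w)
  | symm _ ih => exact .symm ih
  | trans _ _ ih₁ ih₂ => exact .trans ih₁ ih₂

end Homotopy

section PathObject

variable {F G : K ⥤ K} (adj : F ⊣ G) (α : 𝟭 K ⟶ F)

/-- Evaluation of the path object `G T` at the end of the cylinder `F` picked out by `α`. -/
noncomputable def evalAt (T : K) : G.obj T ⟶ T :=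
  α.app (G.obj T) ≫ adj.counit.app T

lemma comp_evalAt {A T : K} (s : A ⟶ G.obj T) :
    s ≫ evalAt adj α T = α.app A ≫ (adj.homEquiv A T).symm s := by
  rw [evalAt, adj.homEquiv_counit, ← α.naturality_assoc, Functor.id_map]

lemma homEquiv_comp_evalAt {A T : K} (H : F.obj A ⟶ T) :
    adj.homEquiv A T H ≫ evalAt adj α T = α.app A ≫ H := by
  rw [comp_evalAt, Equiv.symm_apply_apply]

lemma hasLiftingProperty_evalAt [HasPushouts K] [HasTerminal K] {U V T : K} (i : U ⟶ V)
    [HasLiftingProperty (starMap α i) (terminal.from T)] :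
    HasLiftingProperty i (evalAt adj α T) := by
  refine ⟨fun {u v} sq => ?_⟩
  have w : i ≫ v = α.app U ≫ (adj.homEquiv U T).symm u := by rw [← sq.w, comp_evalAt]
  have sq' : CommSq (pushout.desc v ((adj.homEquiv U T).symm u) w) (starMap α i)
      (terminal.from T) (terminal.from _) := ⟨by simp⟩
  have lift_inl : α.app V ≫ sq'.lift = v := by
    have := pushout.inl _ _ ≫= sq'.fac_left
    unfold starMap at this
    rwa [pushout.inl_desc_assoc, pushout.inl_desc] at this
  have lift_inr : F.map i ≫ sq'.lift = (adj.homEquiv U T).symm u := by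
    have := pushout.inr _ _ ≫= sq'.fac_left
    unfold starMap at this
    rwa [pushout.inr_desc_assoc, pushout.inr_desc] at this
  refine ⟨⟨⟨adj.homEquiv V T sq'.lift, ?_, ?_⟩⟩⟩
  · rw [← adj.homEquiv_naturality_left, lift_inr, Equiv.apply_symm_apply]
  · rw [homEquiv_comp_evalAt, lift_inl]

end PathObject

/-- The lift of `γ_A` against evaluation at `0`, evaluated at `1`, is the homotopy `c ≃ b`. -/
lemma Htp.of_htp_of_htp [HasBinaryCoproducts K] {cyl : Cylinder K} {G : K ⥤ K}
    (adj : cyl.C ⊣ G) {A T : K}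
    [HasLiftingProperty (cyl.γ.app A) (evalAt adj cyl.γ₀ T)] {a b c : A ⟶ T}
    (hab : Htp cyl a b) (hac : Htp cyl a c) : Htp cyl c b := by
  obtain ⟨H, hH⟩ := hab
  obtain ⟨H', hac₀, hac₁⟩ := htp_iff.1 hac
  let t : (double K).obj A ⟶ G.obj T :=
    coprod.desc (adj.homEquiv A T H') (adj.homEquiv A T (cyl.σ.app A ≫ b))
  have t_evalAt (β : 𝟭 K ⟶ cyl.C) :
      t ≫ evalAt adj β T = coprod.desc (β.app A ≫ H') (β.app A ≫ cyl.σ.app A ≫ b) :=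
    (coprod.desc_comp _ _ _).trans (by rw [homEquiv_comp_evalAt, homEquiv_comp_evalAt]; rfl)
  have sq : CommSq t (cyl.γ.app A) (evalAt adj cyl.γ₀ T) H :=
    ⟨(t_evalAt cyl.γ₀).trans (by rw [hac₀, reassoc_of% cyl.γ₀_app_σ_app A, hH]; rfl)⟩
  refine ⟨sq.lift ≫ evalAt adj cyl.γ₁ T, ?_⟩
  rw [← Category.assoc, sq.fac_left, t_evalAt, hac₁, reassoc_of% cyl.γ₁_app_σ_app A]
  rfl

section Fibrant

variable [HasBinaryCoproducts K] [HasPushouts K] [HasTerminal K]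
  {cyl : Cylinder K} {S I : MorphismProperty K}

lemma Fibrant.rlp_evalAt_γ₀ {T : K} (hT : Fibrant cyl S I T) {G : K ⥤ K} (adj : cyl.C ⊣ G) :
    Rlp I (evalAt adj cyl.γ₀ T) := fun _ _ i hi =>
  have := hT _ ⟨0, Or.inr (Or.inl ⟨_, _, i, hi, rfl⟩)⟩
  hasLiftingProperty_evalAt adj cyl.γ₀ i

lemma Fibrant.htp_of_htp_of_htp {T : K} (hT : Fibrant cyl S I T) [cyl.C.IsLeftAdjoint]
    (hγ : ∀ A : K, Llp (Rlp I) (cyl.γ.app A))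
    {A : K} {a b c : A ⟶ T} (hab : Htp cyl a b) (hac : Htp cyl a c) : Htp cyl c b :=
  let adj := Adjunction.ofIsLeftAdjoint cyl.C
  have := hγ A _ (hT.rlp_evalAt_γ₀ adj)
  Htp.of_htp_of_htp adj hab hac

lemma Fibrant.htp_symm {T : K} (hT : Fibrant cyl S I T) [cyl.C.IsLeftAdjoint]
    (hγ : ∀ A : K, Llp (Rlp I) (cyl.γ.app A)) {A : K} {a b : A ⟶ T} (h : Htp cyl a b) :
    Htp cyl b a :=
  hT.htp_of_htp_of_htp hγ (.refl a) h

lemma Fibrant.htp_trans {T : K} (hT : Fibrant cyl S I T) [cyl.C.IsLeftAdjoint]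
    (hγ : ∀ A : K, Llp (Rlp I) (cyl.γ.app A)) {A : K} {a b c : A ⟶ T}
    (hab : Htp cyl a b) (hbc : Htp cyl b c) : Htp cyl a c :=
  hT.htp_of_htp_of_htp hγ hbc (hT.htp_symm hγ hab)

lemma Fibrant.htp_of_htpEq {T : K} (hT : Fibrant cyl S I T) [cyl.C.IsLeftAdjoint]
    (hγ : ∀ A : K, Llp (Rlp I) (cyl.γ.app A)) {A : K} {a b : A ⟶ T} (h : HtpEq cyl a b) :
    Htp cyl a b := by
  induction h with
  | base h => exact h
  | symm _ ih => exact hT.htp_symm hγ ih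
  | trans _ _ ih₁ ih₂ => exact hT.htp_trans hγ ih₁ ih₂

lemma weq_of_htp_inverse {X Y : K} {f : X ⟶ Y} {g : Y ⟶ X} (hfg : Htp cyl (f ≫ g) (𝟙 X))
    (hgf : Htp cyl (g ≫ f) (𝟙 Y)) : Weq cyl S I f := by
  refine fun T _ => ⟨fun t => ⟨g ≫ t, .base (by simpa using hfg.comp_right t)⟩, fun u v huv => ?_⟩
  have hu : Htp cyl (g ≫ f ≫ u) u := by simpa using hgf.comp_right u
  have hv : Htp cyl (g ≫ f ≫ v) v := by simpa using hgf.comp_right v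
  exact .trans (.symm (.base hu)) (.trans (huv.comp_left g) (.base hv))

end Fibrant

theorem statement16_general {K : Type u} [Category.{v} K]
    [HasTerminal K] [HasBinaryCoproducts K] [HasPushouts K]
    (Cof : MorphismProperty K) (I : MorphismProperty K) (hgen : Cof = Llp (Rlp I))
    (cyl : Cylinder K) (hcyl : cyl.IsCylinderFor Cof) (hcart : cyl.IsCartesian Cof)
    (S : MorphismProperty K)
    {X Y : K} (hX : Fibrant cyl S I X) (hY : Fibrant cyl S I Y) (f : X ⟶ Y) :
    Weq cyl S I f ↔
      ∃ g : Y ⟶ X, Htp cyl (f ≫ g) (𝟙 X) ∧ Htp cyl (g ≫ f) (𝟙 Y) := by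
  have hγ : ∀ A : K, Llp (Rlp I) (cyl.γ.app A) := hgen ▸ hcyl
  have := hcart.leftAdjoint
  refine ⟨fun hf => ?_, fun ⟨g, hfg, hgf⟩ => weq_of_htp_inverse hfg hgf⟩
  obtain ⟨g, hfg⟩ := (hf X hX).1 (𝟙 X)
  have hgf : HtpEq cyl (g ≫ f) (𝟙 Y) := (hf Y hY).2 _ _ (by simpa using hfg.comp_right f)
  exact ⟨g, hX.htp_of_htpEq hγ hfg, hY.htp_of_htpEq hγ hgf⟩

/-- Corollary: weak equivalences between fibrant objects are the
homotopy equivalences. -/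
theorem statement16 {K : Type u} [Category.{v} K]
    [HasInitial K] [HasTerminal K] [HasBinaryCoproducts K] [HasPushouts K]
    (hK : IsLocallyPresentable K)
    (Cof : MorphismProperty K) (hwfs : IsWFS Cof (Rlp Cof))
    (I : MorphismProperty K) (hIset : IsSmallClass I)
    (hIL : ∀ ⦃X Y : K⦄ (f : X ⟶ Y), I f → Cof f) (hgen : Cof = Llp (Rlp I))
    (hcof : AllCofibrant Cof)
    (cyl : Cylinder K) (hcyl : cyl.IsCylinderFor Cof) (hcart : cyl.IsCartesian Cof)
    (S : MorphismProperty K) (hS : ∀ ⦃X Y : K⦄ (f : X ⟶ Y), S f → Cof f)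
    {X Y : K} (hX : Fibrant cyl S I X) (hY : Fibrant cyl S I Y) (f : X ⟶ Y) :
    Weq cyl S I f ↔
      ∃ g : Y ⟶ X, Htp cyl (f ≫ g) (𝟙 X) ∧ Htp cyl (g ≫ f) (𝟙 Y) :=
  statement16_general Cof I hgen cyl hcyl hcart S hX hY f

end Paper
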